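/- Let α be a nonempty finite type and let μ be a probability distribution on α × Bool × Bool with coordinate random variables A, X, Y. Assume (i) P(A=a) > 0 for every a ∈ α, (ii) A and Y are conditionally independent given X, (iii) X and Y are not independent, and (iv) the noise is label-independent: P(Y=1|X=0) = P(Y=0|X=1). Let p₁ := P(Y=1) and p* := min{ min_a P(Y=1|A=a), 1 − max_a P(Y=1|A=a) }, and assume p* < 1/2. Then P(X=1) lies in uIcc(p₁, (p₁ − p*)/(1 − 2p*)) ∪ uIcc(1 − (p₁ − p*)/(1 − 2p*), 1 − p₁), where uIcc(x, y) denotes the closed interval between x and y irrespective of their order. (Corollary 3: refinement under label-independent noise.) -/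

import Mathlib

/-!
Write `q = P(X = 1)` and `ε = P(Y = 1 | X = 0) = P(Y = 0 | X = 1)`; dependence of `X` and `Y`
makes both values of `X` have positive probability. Then `p₁ = (1 - ε) q + ε (1 - q)`, and
conditional independence makes every `P(Y = 1 | A = a)` a convex combination of `ε` and `1 - ε`,
so `min ε (1 - ε) ≤ p*`. If `ε ≤ 1/2` then `q = (p₁ - ε) / (1 - 2ε)`, and
`(p₁ - t) / (1 - 2t) = p₁ + (2p₁ - 1) · t / (1 - 2t)` is monotone in `t ∈ [0, 1/2)`, so `q` lies
between its values at `t = 0` and `t = p*`. If `ε ≥ 1/2`, the same applies to `1 - q` and `1 - ε`.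
-/

open Classical in
/-- Probability of an event `E` under a finitely supported distribution `μ`. -/
noncomputable def pr {Ω : Type*} [Fintype Ω] (μ : Ω → ℝ) (E : Ω → Prop) : ℝ :=
  ∑ ω, if E ω then μ ω else 0

/-- Conditional probability `P(E | F) = P(E ∧ F) / P(F)`. -/
noncomputable def cpr {Ω : Type*} [Fintype Ω] (μ : Ω → ℝ) (E F : Ω → Prop) : ℝ :=
  pr μ (fun ω => E ω ∧ F ω) / pr μ F

section Probability

variable {Ω : Type*} [Fintype Ω] {μ : Ω → ℝ}

lemma pr_nonneg (hnn : ∀ ω, 0 ≤ μ ω) (E : Ω → Prop) : 0 ≤ pr μ E :=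
  Finset.sum_nonneg fun ω _ => by split_ifs <;> simp [hnn ω]

lemma pr_congr {E F : Ω → Prop} (h : ∀ ω, E ω ↔ F ω) : pr μ E = pr μ F := by
  rw [funext fun ω => propext (h ω)]

lemma pr_and_comm (E F : Ω → Prop) :
    pr μ (fun ω => E ω ∧ F ω) = pr μ (fun ω => F ω ∧ E ω) :=
  pr_congr fun _ => and_comm

lemma pr_mono (hnn : ∀ ω, 0 ≤ μ ω) {E F : Ω → Prop} (h : ∀ ω, E ω → F ω) :
    pr μ E ≤ pr μ F := by
  refine Finset.sum_le_sum fun ω _ => ?_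
  by_cases hE : E ω
  · simp [hE, h ω hE]
  · simp only [hE, if_false]
    split_ifs <;> simp [hnn ω]

lemma pr_and_add_pr_and_not (E F : Ω → Prop) :
    pr μ (fun ω => E ω ∧ F ω) + pr μ (fun ω => E ω ∧ ¬ F ω) = pr μ E := by
  unfold pr
  rw [← Finset.sum_add_distrib]
  refine Finset.sum_congr rfl fun ω _ => ?_
  by_cases hE : E ω <;> by_cases hF : F ω <;> simp [hE, hF]

lemma pr_true (hsum : ∑ ω, μ ω = 1) : pr μ (fun _ => True) = 1 := by
  simpa [pr] using hsum

lemma pr_not (hsum : ∑ ω, μ ω = 1) (E : Ω → Prop) : pr μ (fun ω => ¬ E ω) = 1 - pr μ E := by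
  have h := pr_and_add_pr_and_not (μ := μ) (fun _ => True) E
  simp only [true_and, pr_true hsum] at h
  linarith

lemma pr_not_and_of_pr_eq_zero (hnn : ∀ ω, 0 ≤ μ ω) {F : Ω → Prop} (hF : pr μ F = 0)
    (E : Ω → Prop) : pr μ (fun ω => ¬ F ω ∧ E ω) = pr μ E := by
  have h := pr_and_add_pr_and_not (μ := μ) E F
  have hEF : pr μ (fun ω => E ω ∧ F ω) = 0 :=
    le_antisymm (hF ▸ pr_mono hnn fun _ h => h.2) (pr_nonneg hnn _)
  rw [pr_and_comm]
  linarith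

lemma cpr_mul_pr {F : Ω → Prop} (hF : pr μ F ≠ 0) (E : Ω → Prop) :
    cpr μ E F * pr μ F = pr μ (fun ω => E ω ∧ F ω) :=
  div_mul_cancel₀ _ hF

lemma cpr_nonneg (hnn : ∀ ω, 0 ≤ μ ω) (E F : Ω → Prop) : 0 ≤ cpr μ E F :=
  div_nonneg (pr_nonneg hnn _) (pr_nonneg hnn _)

lemma cpr_le_one (hnn : ∀ ω, 0 ≤ μ ω) (E F : Ω → Prop) : cpr μ E F ≤ 1 :=
  div_le_one_of_le₀ (pr_mono hnn fun _ h => h.2) (pr_nonneg hnn _)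

lemma cpr_add_cpr_not {F : Ω → Prop} (hF : pr μ F ≠ 0) (E : Ω → Prop) :
    cpr μ E F + cpr μ (fun ω => ¬ E ω) F = 1 := by
  rw [cpr, cpr, ← add_div, div_eq_one_iff_eq hF, pr_and_comm E, pr_and_comm (fun ω => ¬ E ω)]
  exact pr_and_add_pr_and_not F E

variable {X : Ω → Bool}

lemma pr_eq_false (hsum : ∑ ω, μ ω = 1) :
    pr μ (fun ω => X ω = false) = 1 - pr μ (fun ω => X ω = true) := by
  rw [← pr_not hsum]
  exact pr_congr fun ω => (Bool.not_eq_true (X ω)).symm.to_iff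

lemma pr_and_true_add_pr_and_false (E : Ω → Prop) :
    pr μ (fun ω => E ω ∧ X ω = true) + pr μ (fun ω => E ω ∧ X ω = false) = pr μ E := by
  simp only [← Bool.not_eq_true]
  exact pr_and_add_pr_and_not E _

lemma pr_eq_cpr_mul_add_cpr_mul (hX : ∀ x, pr μ (fun ω => X ω = x) ≠ 0) (E : Ω → Prop) :
    pr μ E = cpr μ E (fun ω => X ω = true) * pr μ (fun ω => X ω = true) +
      cpr μ E (fun ω => X ω = false) * pr μ (fun ω => X ω = false) := by
  rw [cpr_mul_pr (hX true), cpr_mul_pr (hX false), pr_and_true_add_pr_and_false]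

lemma cpr_false_eq {F : Ω → Prop} (hF : pr μ F ≠ 0) :
    cpr μ (fun ω => X ω = false) F = 1 - cpr μ (fun ω => X ω = true) F := by
  rw [← cpr_add_cpr_not hF (fun ω => X ω = true)]
  simp only [Bool.not_eq_true, add_sub_cancel_left]

lemma cpr_eq_of_condIndep (hX : ∀ x, pr μ (fun ω => X ω = x) ≠ 0) {E G : Ω → Prop}
    (hCI : ∀ x, cpr μ (fun ω => E ω ∧ G ω) (fun ω => X ω = x) =
      cpr μ E (fun ω => X ω = x) * cpr μ G (fun ω => X ω = x)) :
    cpr μ G E = cpr μ G (fun ω => X ω = true) * cpr μ (fun ω => X ω = true) E +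
      cpr μ G (fun ω => X ω = false) * cpr μ (fun ω => X ω = false) E := by
  have hGE : pr μ (fun ω => G ω ∧ E ω) =
      cpr μ G (fun ω => X ω = true) * pr μ (fun ω => X ω = true ∧ E ω) +
        cpr μ G (fun ω => X ω = false) * pr μ (fun ω => X ω = false ∧ E ω) := by
    rw [pr_and_comm G E, pr_eq_cpr_mul_add_cpr_mul hX (fun ω => E ω ∧ G ω), hCI, hCI,
      pr_and_comm _ E, pr_and_comm _ E, ← cpr_mul_pr (hX true), ← cpr_mul_pr (hX false)]
    ring
  rw [cpr, hGE, add_div, mul_div_assoc, mul_div_assoc]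
  rfl

lemma pr_pos_of_not_indep {β : Type*} (hnn : ∀ ω, 0 ≤ μ ω) (hsum : ∑ ω, μ ω = 1) {Y : Ω → β}
    (hdep : ¬ ∀ x y, pr μ (fun ω => X ω = x ∧ Y ω = y) =
      pr μ (fun ω => X ω = x) * pr μ (fun ω => Y ω = y)) (x : Bool) :
    0 < pr μ (fun ω => X ω = x) := by
  refine (pr_nonneg hnn _).lt_of_ne fun h0 => hdep ?_
  have hnot : ∀ E : Ω → Prop, pr μ (fun ω => X ω = !x ∧ E ω) = pr μ E := fun E =>
    (pr_congr fun ω => by rw [Bool.eq_not_iff]).trans (pr_not_and_of_pr_eq_zero hnn h0.symm E)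
  intro x' y
  rcases Bool.eq_or_eq_not x' x with rfl | rfl
  · rw [← h0, zero_mul]
    exact le_antisymm (h0 ▸ pr_mono hnn fun _ h => h.1) (pr_nonneg hnn _)
  · have h1 : pr μ (fun ω => X ω = !x) = 1 := by
      rw [← pr_true hsum, ← hnot fun _ => True]
      exact pr_congr fun _ => (and_true _).symm.to_iff
    rw [hnot, h1, one_mul]

end Probability

lemma one_sub_mul_add_mul_one_sub_mem_uIcc {e w : ℝ} (hw0 : 0 ≤ w) (hw1 : w ≤ 1) :
    (1 - e) * w + e * (1 - w) ∈ Set.uIcc e (1 - e) := by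
  rw [← segment_eq_uIcc, segment_eq_image']
  exact ⟨w, ⟨hw0, hw1⟩, by simp only [smul_eq_mul]; ring⟩

lemma min_le_min_inf'_one_sub_sup' {ι : Type*} {s : Finset ι} (hs : s.Nonempty) {f : ι → ℝ}
    {e : ℝ} (h : ∀ i ∈ s, f i ∈ Set.uIcc e (1 - e)) :
    min e (1 - e) ≤ min (s.inf' hs f) (1 - s.sup' hs f) := by
  refine le_min (Finset.le_inf' hs f fun i hi => (h i hi).1) ?_
  have hsup : s.sup' hs f ≤ max e (1 - e) := Finset.sup'_le hs f fun i hi => (h i hi).2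
  linarith [min_add_max e (1 - e)]

lemma mem_uIcc_of_eq_flip {p q e s : ℝ} (he : 0 ≤ e) (hes : e ≤ s) (hs : s < 1 / 2)
    (hp : p = (1 - e) * q + e * (1 - q)) : q ∈ Set.uIcc p ((p - s) / (1 - 2 * s)) := by
  have hshift : ∀ t < 1 / 2, (p - t) / (1 - 2 * t) = p + (2 * p - 1) * (t / (1 - 2 * t)) := by
    intro t ht
    rw [mul_div_assoc', add_div' _ _ _ (by linarith)]
    ring
  have hq : q = (p - e) / (1 - 2 * e) := by
    rw [eq_div_iff (by linarith)]
    linear_combination -hp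
  have hmono : e / (1 - 2 * e) ∈ Set.uIcc 0 (s / (1 - 2 * s)) :=
    Set.mem_uIcc_of_le (div_nonneg he (by linarith))
      (div_le_div₀ (by linarith) hes (by linarith) (by linarith))
  have hscale := Set.mem_image_of_mem ((2 * p - 1) * ·) hmono
  rw [Set.image_const_mul_uIcc, mul_zero] at hscale
  have htrans := Set.mem_image_of_mem (p + ·) hscale
  rw [Set.image_const_add_uIcc, add_zero] at htrans
  rwa [hq, hshift e (by linarith), hshift s hs]

lemma mem_union_uIcc_of_eq_flip {p q e s : ℝ} (he0 : 0 ≤ e) (he1 : e ≤ 1)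
    (hes : min e (1 - e) ≤ s) (hs : s < 1 / 2) (hp : p = (1 - e) * q + e * (1 - q)) :
    q ∈ Set.uIcc p ((p - s) / (1 - 2 * s)) ∪ Set.uIcc (1 - (p - s) / (1 - 2 * s)) (1 - p) := by
  rcases le_total e (1 / 2) with h | h
  · rw [min_eq_left (by linarith)] at hes
    exact Or.inl (mem_uIcc_of_eq_flip he0 hes hs hp)
  · rw [min_eq_right (by linarith)] at hes
    have hflip := mem_uIcc_of_eq_flip (p := p) (q := 1 - q) (by linarith) hes hs
      (by rw [hp]; ring)
    have := Set.mem_image_of_mem (1 - ·) hflip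
    rw [Set.image_const_sub_uIcc, sub_sub_cancel, Set.uIcc_comm] at this
    exact Or.inr this

/-- Corollary 3: refinement under label-independent noise. -/
theorem stmt4 {α : Type*} [Fintype α] [Nonempty α]
    (μ : α × Bool × Bool → ℝ)
    (hnn : ∀ ω, 0 ≤ μ ω) (hsum : ∑ ω, μ ω = 1)
    (hA : ∀ a : α, 0 < pr μ (fun ω => ω.1 = a))
    (hCI : ∀ (a : α) (y x : Bool), 0 < pr μ (fun ω => ω.2.1 = x) →
      cpr μ (fun ω => ω.1 = a ∧ ω.2.2 = y) (fun ω => ω.2.1 = x) =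
        cpr μ (fun ω => ω.1 = a) (fun ω => ω.2.1 = x) *
          cpr μ (fun ω => ω.2.2 = y) (fun ω => ω.2.1 = x))
    (hdep : ¬ ∀ x y : Bool,
      pr μ (fun ω => ω.2.1 = x ∧ ω.2.2 = y) =
        pr μ (fun ω => ω.2.1 = x) * pr μ (fun ω => ω.2.2 = y))
    (hnoise : cpr μ (fun ω => ω.2.2 = true) (fun ω => ω.2.1 = false) =
              cpr μ (fun ω => ω.2.2 = false) (fun ω => ω.2.1 = true))
    (p₁ pstar : ℝ)
    (hp₁ : p₁ = pr μ (fun ω => ω.2.2 = true))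
    (hpstar : pstar =
      min (Finset.univ.inf' Finset.univ_nonempty
            (fun a : α => cpr μ (fun ω => ω.2.2 = true) (fun ω => ω.1 = a)))
          (1 - Finset.univ.sup' Finset.univ_nonempty
            (fun a : α => cpr μ (fun ω => ω.2.2 = true) (fun ω => ω.1 = a))))
    (hhalf : pstar < 1 / 2) :
    pr μ (fun ω => ω.2.1 = true) ∈
      Set.uIcc p₁ ((p₁ - pstar) / (1 - 2 * pstar)) ∪
        Set.uIcc (1 - (p₁ - pstar) / (1 - 2 * pstar)) (1 - p₁) := by
  have hXpos := pr_pos_of_not_indep hnn hsum hdep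
  have hX : ∀ x, pr μ (fun ω => ω.2.1 = x) ≠ 0 := fun x => (hXpos x).ne'
  set ε := cpr μ (fun ω => ω.2.2 = true) (fun ω => ω.2.1 = false)
  have hflip : cpr μ (fun ω => ω.2.2 = true) (fun ω => ω.2.1 = true) = 1 - ε := by
    rw [hnoise, cpr_false_eq (hX true), sub_sub_cancel]
  have hp : p₁ = (1 - ε) * pr μ (fun ω => ω.2.1 = true) +
      ε * (1 - pr μ (fun ω => ω.2.1 = true)) := by
    rw [hp₁, pr_eq_cpr_mul_add_cpr_mul hX, hflip, pr_eq_false hsum]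
  have hcond : ∀ a ∈ Finset.univ,
      cpr μ (fun ω => ω.2.2 = true) (fun ω => ω.1 = a) ∈ Set.uIcc ε (1 - ε) := by
    intro a _
    rw [cpr_eq_of_condIndep hX fun x => hCI a true x (hXpos x),
      hflip, cpr_false_eq (hA a).ne']
    exact one_sub_mul_add_mul_one_sub_mem_uIcc (cpr_nonneg hnn _ _) (cpr_le_one hnn _ _)
  exact mem_union_uIcc_of_eq_flip (cpr_nonneg hnn _ _) (cpr_le_one hnn _ _)
    (hpstar ▸ min_le_min_inf'_one_sub_sup' _ hcond) hhalf hp
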